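/- arXiv:1804.00588 — 7 statements merged into one kernel-verified Lean document; each statement's English description precedes it below -/
import Mathlib

section
/- Let G be a graph and X a finite set of vertices. A subset Y ⊆ X is critical in G (i.e. the set of components of G − Y with neighbourhood exactly Y is infinite) if and only if the set C_X(Y) of components of G − X with neighbourhood exactly Y is infinite. -/
open SimpleGraph Set

variable {V : Type*}

/-- The set of components of `G - X` (the subgraph of `G` induced on `Xᶜ`). -/
abbrev Comps (G : SimpleGraph V) (X : Set V) := (G.induce Xᶜ).ConnectedComponent

/-- The vertex set (in `V`) of a component of `G - X`. -/
def suppV (G : SimpleGraph V) (X : Set V) (C : Comps G X) : Set V :=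
  Subtype.val '' {v | (G.induce Xᶜ).connectedComponentMk v = C}

/-- The neighbourhood `N(C) ⊆ X` of a component `C` of `G - X`. -/
def nbhd (G : SimpleGraph V) (X : Set V) (C : Comps G X) : Set V :=
  {x ∈ X | ∃ v ∈ suppV G X C, G.Adj x v}

/-- `C_X(Y)`: the components of `G - X` with neighbourhood exactly `Y`. -/
def compsWithNbhd (G : SimpleGraph V) (X Y : Set V) : Set (Comps G X) :=
  {C | nbhd G X C = Y}

/-- A finite vertex set `Y` is critical if `C_Y(Y)` is infinite. -/
def Critical (G : SimpleGraph V) (Y : Set V) : Prop :=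
  Y.Finite ∧ (compsWithNbhd G Y Y).Infinite

private lemma mem_suppV_iff {G : SimpleGraph V} {X : Set V} {C : Comps G X} {v : V} :
    v ∈ suppV G X C ↔ ∃ h : v ∈ Xᶜ, (G.induce Xᶜ).connectedComponentMk ⟨v, h⟩ = C := by
  constructor
  · rintro ⟨⟨w, hw⟩, hmk, rfl⟩
    exact ⟨hw, hmk⟩
  · rintro ⟨h, hmk⟩
    exact ⟨⟨v, h⟩, hmk, rfl⟩

private lemma suppV_unique {G : SimpleGraph V} {X : Set V} {C C' : Comps G X} {v : V}
    (h1 : v ∈ suppV G X C) (h2 : v ∈ suppV G X C') : C = C' := by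
  rw [mem_suppV_iff] at h1 h2
  obtain ⟨h, hmk⟩ := h1
  obtain ⟨h', hmk'⟩ := h2
  rw [← hmk, ← hmk']

private lemma walk_closed {α : Type*} {H : SimpleGraph α} {S : Set α}
    (hS : ∀ a b, H.Adj a b → a ∈ S → b ∈ S) {u v : α} (h : H.Reachable u v)
    (hu : u ∈ S) : v ∈ S := by
  obtain ⟨w⟩ := h
  exact SimpleGraph.Walk.rec (motive := fun a b _ => a ∈ S → b ∈ S) (fun h => h)
    (fun adj _ ih ha => ih (hS _ _ adj ha)) w hu

/-- The inclusion hom from `G - X` to `G - Y` when `Y ⊆ X`. -/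
private def downHom (G : SimpleGraph V) {X Y : Set V} (hYX : Y ⊆ X) :
    G.induce Xᶜ →g G.induce Yᶜ :=
  ⟨fun v => ⟨v.val, fun hv => v.2 (hYX hv)⟩, fun h => h⟩

private lemma supp_subset_supp_map (G : SimpleGraph V) {X Y : Set V} (hYX : Y ⊆ X)
    (C : Comps G X) :
    suppV G X C ⊆ suppV G Y (C.map (downHom G hYX)) := by
  intro v hv
  rw [mem_suppV_iff] at hv
  obtain ⟨h, hmk⟩ := hv
  rw [mem_suppV_iff]
  refine ⟨fun hv => h (hYX hv), ?_⟩
  rw [← hmk]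
  rfl

/-- Key lemma A: if the neighbourhood of `C` (a component of `G-X`) is contained
in `Y`, then the component of `G-Y` containing it has the same support. -/
private lemma supp_map_eq (G : SimpleGraph V) {X Y : Set V} (hYX : Y ⊆ X)
    (C : Comps G X) (hnb : nbhd G X C ⊆ Y) :
    suppV G Y (C.map (downHom G hYX)) = suppV G X C := by
  refine Subset.antisymm ?_ (supp_subset_supp_map G hYX C)
  intro v hv
  rw [mem_suppV_iff] at hv
  obtain ⟨hvY, hmk⟩ := hv
  obtain ⟨c, hc⟩ := C.exists_rep
  have hreach : (G.induce Yᶜ).Reachable (downHom G hYX c) ⟨v, hvY⟩ := by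
    apply SimpleGraph.ConnectedComponent.exact
    rw [hmk, ← hc]
    rfl
  have := walk_closed (S := {w : ↥Yᶜ | w.val ∈ suppV G X C}) ?_ hreach ?_
  · exact this
  · rintro a b hab ha
    simp only [Set.mem_setOf_eq, mem_suppV_iff] at ha ⊢
    obtain ⟨haX, hmka⟩ := ha
    by_cases hbX : b.val ∈ X
    · exfalso
      have : b.val ∈ nbhd G X C := ⟨hbX, a.val, mem_suppV_iff.mpr ⟨haX, hmka⟩, hab.symm⟩
      exact b.2 (hnb this)
    · refine ⟨hbX, ?_⟩
      rw [← hmka]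
      exact SimpleGraph.ConnectedComponent.sound
        (SimpleGraph.Adj.reachable (by exact hab.symm : (G.induce Xᶜ).Adj ⟨b.val, hbX⟩ ⟨a.val, haX⟩))
  · exact mem_suppV_iff.mpr ⟨c.2, hc⟩

private lemma nbhd_map (G : SimpleGraph V) {X Y : Set V} (hYX : Y ⊆ X)
    (C : Comps G X) (hnb : nbhd G X C = Y) :
    nbhd G Y (C.map (downHom G hYX)) = Y := by
  rw [nbhd, supp_map_eq G hYX C hnb.le]
  ext y
  simp only [Set.mem_setOf_eq]
  constructor
  · rintro ⟨hy, _⟩; exact hy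
  · intro hy
    have : y ∈ nbhd G X C := hnb ▸ hy
    obtain ⟨_, v, hv, ha⟩ := this
    exact ⟨hy, v, hv, ha⟩

private lemma exists_preimage (G : SimpleGraph V) {X Y : Set V} (hYX : Y ⊆ X)
    (D : Comps G Y) (hD : nbhd G Y D = Y) (hdisj : suppV G Y D ∩ X = ∅) :
    ∃ C ∈ compsWithNbhd G X Y, C.map (downHom G hYX) = D := by
  obtain ⟨d, hd⟩ := D.exists_rep
  have hdsupp : d.val ∈ suppV G Y D := mem_suppV_iff.mpr ⟨d.2, hd⟩
  have hdX : d.val ∈ Xᶜ := fun h => (Set.eq_empty_iff_forall_notMem.mp hdisj d.val) ⟨hdsupp, h⟩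
  set C : Comps G X := (G.induce Xᶜ).connectedComponentMk ⟨d.val, hdX⟩ with hCdef
  have hmap : C.map (downHom G hYX) = D := by
    rw [hCdef, ConnectedComponent.map_mk]
    exact hd
  have hsub : suppV G X C ⊆ suppV G Y D := hmap ▸ supp_subset_supp_map G hYX C
  have hsupp : suppV G X C = suppV G Y D := by
    refine Subset.antisymm hsub ?_
    intro v hv
    rw [mem_suppV_iff] at hv
    obtain ⟨hvY, hmkv⟩ := hv
    have hreach : (G.induce Yᶜ).Reachable d ⟨v, hvY⟩ :=
      SimpleGraph.ConnectedComponent.exact (hd.trans hmkv.symm)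
    have := walk_closed (S := {w : ↥Yᶜ | w.val ∈ suppV G X C}) ?_ hreach ?_
    · exact this
    · rintro a b hab ha
      simp only [Set.mem_setOf_eq] at ha ⊢
      have haD : a.val ∈ suppV G Y D := hsub ha
      have hbD : b.val ∈ suppV G Y D := by
        rw [mem_suppV_iff] at haD ⊢
        refine ⟨b.2, ?_⟩
        rw [← haD.2]
        exact SimpleGraph.ConnectedComponent.sound
          (SimpleGraph.Adj.reachable (by exact hab.symm :
            (G.induce Yᶜ).Adj ⟨b.val, b.2⟩ ⟨a.val, a.2⟩))
      have hbX : b.val ∈ Xᶜ :=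
        fun h => (Set.eq_empty_iff_forall_notMem.mp hdisj b.val) ⟨hbD, h⟩
      rw [mem_suppV_iff] at ha ⊢
      obtain ⟨haX, hmka⟩ := ha
      refine ⟨hbX, ?_⟩
      rw [← hmka]
      exact SimpleGraph.ConnectedComponent.sound
        (SimpleGraph.Adj.reachable (by exact hab.symm :
          (G.induce Xᶜ).Adj ⟨b.val, hbX⟩ ⟨a.val, haX⟩))
    · exact mem_suppV_iff.mpr ⟨hdX, rfl⟩
  refine ⟨C, ?_, hmap⟩
  show nbhd G X C = Y
  ext x
  constructor
  · rintro ⟨hxX, v, hv, ha⟩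
    by_contra hxY
    have hvD : v ∈ suppV G Y D := hsupp ▸ hv
    rw [mem_suppV_iff] at hvD
    obtain ⟨hvY, hmkv⟩ := hvD
    have hxD : x ∈ suppV G Y D := by
      rw [mem_suppV_iff]
      refine ⟨hxY, ?_⟩
      rw [← hmkv]
      exact SimpleGraph.ConnectedComponent.sound
        (SimpleGraph.Adj.reachable (by exact ha :
          (G.induce Yᶜ).Adj ⟨x, hxY⟩ ⟨v, hvY⟩))
    exact (Set.eq_empty_iff_forall_notMem.mp hdisj x) ⟨hxD, hxX⟩
  · intro hx
    have : x ∈ nbhd G Y D := by rw [hD]; exact hx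
    obtain ⟨_, v, hv, ha⟩ := this
    exact ⟨hYX hx, v, hsupp ▸ hv, ha⟩

private lemma meets_finite (G : SimpleGraph V) {X Y : Set V} (hX : X.Finite) :
    {D : Comps G Y | (suppV G Y D ∩ X).Nonempty}.Finite := by
  have h1 : {D : Comps G Y | (suppV G Y D ∩ X).Nonempty} ⊆
      ⋃ x ∈ X, {D : Comps G Y | x ∈ suppV G Y D} := by
    rintro D ⟨x, hx1, hx2⟩
    exact Set.mem_biUnion hx2 hx1
  refine Set.Finite.subset (Set.Finite.biUnion hX fun x _ => ?_) h1
  exact Set.Subsingleton.finite fun D hD D' hD' => suppV_unique hD hD'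

/-- For `Y ⊆ X` with `X` finite, `Y` is critical iff `C_X(Y)` is
infinite. -/
theorem stmt1 (G : SimpleGraph V) (X Y : Set V) (hX : X.Finite) (hYX : Y ⊆ X) :
    Critical G Y ↔ (compsWithNbhd G X Y).Infinite := by
  constructor
  · rintro ⟨hYfin, hinf⟩
    have hS : ((compsWithNbhd G Y Y) \
        {D : Comps G Y | (suppV G Y D ∩ X).Nonempty}).Infinite :=
      hinf.diff (meets_finite G hX)
    have hsub : (compsWithNbhd G Y Y) \
        {D : Comps G Y | (suppV G Y D ∩ X).Nonempty} ⊆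
        (ConnectedComponent.map (downHom G hYX)) '' compsWithNbhd G X Y := by
      rintro D ⟨hD1, hD2⟩
      have hdisj : suppV G Y D ∩ X = ∅ := Set.not_nonempty_iff_eq_empty.mp hD2
      obtain ⟨C, hC, hmap⟩ := exists_preimage G hYX D hD1 hdisj
      exact ⟨C, hC, hmap⟩
    by_contra h
    rw [Set.not_infinite] at h
    exact (hS.mono hsub) (h.image _)
  · intro hinf
    refine ⟨hX.subset hYX, ?_⟩
    have hinj : Set.InjOn (ConnectedComponent.map (downHom G hYX))
        (compsWithNbhd G X Y) := by
      intro C hC C' hC' hEq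
      have h1 : suppV G X C = suppV G X C' := by
        rw [← supp_map_eq G hYX C hC.le, ← supp_map_eq G hYX C' hC'.le, hEq]
      obtain ⟨c, hc⟩ := C.exists_rep
      have hcC : c.val ∈ suppV G X C := mem_suppV_iff.mpr ⟨c.2, hc⟩
      exact suppV_unique hcC (h1 ▸ hcC)
    have hmaps : Set.MapsTo (ConnectedComponent.map (downHom G hYX))
        (compsWithNbhd G X Y) (compsWithNbhd G Y Y) :=
      fun C hC => nbhd_map G hYX C hC
    exact (hinf.image hinj).mono hmaps.image_subset
end

section
/- Let Y be a critical vertex set of a graph G and X a finite set of vertices with Y ⊄ X (Y not a subset of X). Then there is exactly one component of G − X that meets Y, and this component contains every component in C_Y(Y) that avoids X. -/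
open SimpleGraph Set

variable {V : Type*}

lemma mem_suppV {G : SimpleGraph V} {X : Set V} {C : Comps G X} {a : V} :
    a ∈ suppV G X C ↔ ∃ w : ↥Xᶜ, (G.induce Xᶜ).connectedComponentMk w = C ∧ ↑w = a := by
  simp [suppV, Set.mem_image]

/-- walk transfer: a walk in `G - Y` avoiding `X` gives reachability in `G - X`. -/
lemma walk_transfer {G : SimpleGraph V} {Y X : Set V} :
    ∀ {u v : ↥Yᶜ} (p : (G.induce Yᶜ).Walk u v) (hp : ∀ w ∈ p.support, (w : V) ∉ X),
    (G.induce Xᶜ).Reachable ⟨u, hp u p.start_mem_support⟩ ⟨v, hp v p.end_mem_support⟩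
  | u, _, .nil, hp => Reachable.refl _
  | u, v, .cons (v := z) h p, hp => by
      have hz : (z : V) ∉ X := hp z (by simp)
      have h1 : (G.induce Xᶜ).Adj ⟨u, hp u (SimpleGraph.Walk.start_mem_support _)⟩
          ⟨z, hz⟩ := by
        simpa [SimpleGraph.comap_adj] using h
      have h2 := walk_transfer p (fun z hz => hp z (by simp [hz]))
      exact h1.reachable.trans h2

lemma suppV_disjoint_of_ne {G : SimpleGraph V} {X : Set V} {C C' : Comps G X}
    {a : V} (ha : a ∈ suppV G X C) (ha' : a ∈ suppV G X C') : C = C' := by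
  obtain ⟨w, hw, rfl⟩ := mem_suppV.mp ha
  obtain ⟨w', hw', hww⟩ := mem_suppV.mp ha'
  have : w' = w := Subtype.val_injective hww
  subst this
  rw [← hw, ← hw']

lemma adj_of_mem_comps {G : SimpleGraph V} {Y : Set V} {D : Comps G Y}
    (hD : D ∈ compsWithNbhd G Y Y) {y : V} (hy : y ∈ Y) :
    ∃ v ∈ suppV G Y D, G.Adj y v := by
  have : y ∈ nbhd G Y D := by rw [hD]; exact hy
  exact this.2

/-- Every vertex of a component of `G - Y` that avoids `X` and whose
neighbourhood is all of `Y` lies in the `G - X` component of `y0 ∈ Y \ X`. -/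
lemma suppV_subset_comp {G : SimpleGraph V} {Y X : Set V} {D : Comps G Y}
    (hD : D ∈ compsWithNbhd G Y Y) (hdisj : Disjoint (suppV G Y D) X)
    {y0 : V} (hy0Y : y0 ∈ Y) (hy0X : y0 ∈ Xᶜ) :
    suppV G Y D ⊆ suppV G X ((G.induce Xᶜ).connectedComponentMk ⟨y0, hy0X⟩) := by
  intro a ha
  obtain ⟨w, hw, rfl⟩ := mem_suppV.mp ha
  obtain ⟨v, hv, hadj⟩ := adj_of_mem_comps hD hy0Y
  obtain ⟨u, hu, rfl⟩ := mem_suppV.mp hv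
  -- u and w are in the same component of G - Y
  have hreach : (G.induce Yᶜ).Reachable u w :=
    SimpleGraph.ConnectedComponent.exact (hu.trans hw.symm)
  obtain ⟨p⟩ := hreach
  classical
  have hps : ∀ z ∈ p.support, (z : V) ∉ X := by
    intro z hz
    have hzr : (G.induce Yᶜ).Reachable u z := ⟨p.takeUntil z hz⟩
    have hzD : (z : V) ∈ suppV G Y D :=
      mem_suppV.mpr ⟨z, by rw [← hu]; exact (SimpleGraph.ConnectedComponent.sound hzr).symm, rfl⟩
    exact fun hzX => (Set.disjoint_left.mp hdisj hzD) hzX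
  have h2 := walk_transfer (X := X) p hps
  have h1 : (G.induce Xᶜ).Adj ⟨y0, hy0X⟩ ⟨u, hps u p.start_mem_support⟩ := by
    simpa [SimpleGraph.comap_adj] using hadj
  have h3 : (G.induce Xᶜ).Reachable ⟨y0, hy0X⟩ ⟨(w : V), hps w p.end_mem_support⟩ :=
    h1.reachable.trans h2
  exact mem_suppV.mpr ⟨⟨(w : V), hps w p.end_mem_support⟩,
    (SimpleGraph.ConnectedComponent.sound h3.symm), rfl⟩

lemma exists_avoiding {G : SimpleGraph V} {Y X : Set V}
    (hinf : (compsWithNbhd G Y Y).Infinite) (hX : X.Finite) :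
    ∃ D ∈ compsWithNbhd G Y Y, Disjoint (suppV G Y D) X := by
  by_contra h
  push_neg at h
  have hsub : compsWithNbhd G Y Y ⊆
      (fun x : ↥Yᶜ => (G.induce Yᶜ).connectedComponentMk x) '' (Subtype.val ⁻¹' X) := by
    intro D hD
    obtain ⟨a, haD, haX⟩ := Set.not_disjoint_iff.mp (h D hD)
    obtain ⟨w, hw, rfl⟩ := mem_suppV.mp haD
    exact ⟨w, haX, hw⟩
  have hfin : ((fun x : ↥Yᶜ => (G.induce Yᶜ).connectedComponentMk x) ''
      (Subtype.val ⁻¹' X)).Finite :=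
    ((hX.preimage (Subtype.val_injective.injOn)).image _)
  exact hinf (hfin.subset hsub)

/-- If `Y` is critical and `X` finite with `Y ⊄ X`, then exactly one
component of `G - X` meets `Y`, and it contains every component in `C_Y(Y)`
avoiding `X`. -/
theorem stmt3 (G : SimpleGraph V) (Y X : Set V) (hY : Critical G Y)
    (hX : X.Finite) (hns : ¬ Y ⊆ X) :
    (∃! C : Comps G X, (suppV G X C ∩ Y).Nonempty) ∧
    (∀ C : Comps G X, (suppV G X C ∩ Y).Nonempty →
      ∀ D ∈ compsWithNbhd G Y Y, Disjoint (suppV G Y D) X →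
        suppV G Y D ⊆ suppV G X C) := by
  obtain ⟨hYfin, hinf⟩ := hY
  obtain ⟨y0, hy0Y, hy0X⟩ := Set.not_subset.mp hns
  have hy0c : y0 ∈ Xᶜ := hy0X
  set C0 : Comps G X := (G.induce Xᶜ).connectedComponentMk ⟨y0, hy0c⟩ with hC0
  obtain ⟨D0, hD0, hD0X⟩ := exists_avoiding hinf hX
  have hy0supp : y0 ∈ suppV G X C0 := mem_suppV.mpr ⟨⟨y0, hy0c⟩, rfl, rfl⟩
  -- uniqueness: any component of G - X meeting Y equals C0
  have huniq : ∀ C : Comps G X, (suppV G X C ∩ Y).Nonempty → C = C0 := by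
    intro C ⟨a, haC, haY⟩
    obtain ⟨w, hw, rfl⟩ := mem_suppV.mp haC
    have hwX : (w : V) ∈ Xᶜ := w.2
    have h1 := suppV_subset_comp hD0 hD0X haY hwX
    have h2 := suppV_subset_comp hD0 hD0X hy0Y hy0c
    -- suppV D0 is nonempty
    obtain ⟨v, hvrep⟩ := D0.exists_rep
    have hv : (v : V) ∈ suppV G Y D0 := mem_suppV.mpr ⟨v, hvrep, rfl⟩
    have hCw : C = (G.induce Xᶜ).connectedComponentMk w := hw.symm
    have := suppV_disjoint_of_ne (h1 hv) (h2 hv)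
    rw [hCw]
    exact this
  constructor
  · exact ⟨C0, ⟨y0, hy0supp, hy0Y⟩, huniq⟩
  · intro C hC D hD hdisj
    have hCeq := huniq C hC
    rw [hCeq, hC0]
    exact suppV_subset_comp hD hdisj hy0Y hy0c
end

section
/- Every rayless graph (a graph containing no one-way infinite path) has no end. Equivalently: if the inverse limit of the system of component sets (C_X with bonding maps sending each component of G − X' to the component of G − X containing it, over finite X ⊆ X') is nonempty, then G contains a ray. -/
open SimpleGraph Set

variable {V : Type*}

/-- The inclusion graph homomorphism `G - X' → G - X`, for `X ⊆ X'`. -/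
def inclHom (G : SimpleGraph V) {X X' : Set V} (h : X ⊆ X') :
    (G.induce X'ᶜ) →g (G.induce Xᶜ) where
  toFun v := ⟨v.1, fun hv => v.2 (h hv)⟩
  map_rel' := fun hadj => hadj

/-- `c_{X',X}`: sends each component of `G - X'` to the component of `G - X`
containing it. -/
def compMap (G : SimpleGraph V) {X X' : Set V} (h : X ⊆ X') :
    Comps G X' → Comps G X :=
  SimpleGraph.ConnectedComponent.map (inclHom G h)

/-!
Given a direction `f`, grow a path greedily. If `u` lies in `f X`, where `X` is the set of
vertices chosen so far, then `f (X ∪ {u})` is a component of `G - X - u` inside the component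
`f X` of `G - X`, which contains `u`; since `f X` is connected, `u` has a neighbour in
`f (X ∪ {u})`, and that neighbour is the next vertex. Every new vertex lies outside the set of
earlier ones, so the sequence is a ray.
-/

section

variable {G : SimpleGraph V}

lemma exists_mem_nbhd_notMem_of_compMap_eq {X X' : Set V} (hXX' : X ⊆ X') (D : Comps G X')
    (v : ↥Xᶜ) (hvX' : v.1 ∈ X')
    (hv : (G.induce Xᶜ).connectedComponentMk v = compMap G hXX' D) :
    ∃ x ∈ nbhd G X' D, x ∉ X := by
  obtain ⟨d, rfl⟩ := D.exists_rep
  obtain ⟨p⟩ := ConnectedComponent.exact (hv.trans (ConnectedComponent.map_mk _ d)).symm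
  let S : Set ↥Xᶜ := {w | ∃ hw : w.1 ∉ X', (G.induce X'ᶜ).connectedComponentMk ⟨w.1, hw⟩ =
    (G.induce X'ᶜ).connectedComponentMk d}
  obtain ⟨e, -, ⟨hfst, hfstD⟩, hsnd⟩ := p.exists_boundary_dart S ⟨d.2, rfl⟩ fun ⟨h, _⟩ => h hvX'
  have hsndX' : e.snd.1 ∈ X' := by
    by_contra hsndX'
    exact hsnd ⟨hsndX', (ConnectedComponent.connectedComponentMk_eq_of_adj
      (G := G.induce X'ᶜ) (v := ⟨e.fst.1, hfst⟩) (w := ⟨e.snd.1, hsndX'⟩) e.adj).symm.trans hfstD⟩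
  exact ⟨e.snd.1, ⟨hsndX', e.fst.1, ⟨⟨e.fst.1, hfst⟩, hfstD, rfl⟩, e.adj.symm⟩, e.snd.2⟩

lemma exists_adj_mem_suppV_insert [DecidableEq V]
    (f : ∀ X : Finset V, Comps G (X : Set V))
    (hf : ∀ (X X' : Finset V) (hXX' : (X : Set V) ⊆ (X' : Set V)), compMap G hXX' (f X') = f X)
    {X : Finset V} {u : V} (hu : u ∈ suppV G X (f X)) :
    ∃ w, G.Adj u w ∧ w ∈ suppV G ↑(insert u X) (f (insert u X)) := by
  obtain ⟨u', hu', rfl⟩ := hu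
  have hXu : (X : Set V) ⊆ (insert u'.1 X : Finset V) := by simp
  obtain ⟨x, ⟨hxu, w, hw, hxw⟩, hxX⟩ := exists_mem_nbhd_notMem_of_compMap_eq hXu _ u' (by simp)
    (hu'.trans (hf _ _ hXu).symm)
  obtain rfl : x = u'.1 := by simpa [hxX] using hxu
  exact ⟨w, hxw, hw⟩

lemma exists_ray_of_forall_exists_adj [DecidableEq V] (P : Finset V → V → Prop)
    (hP : ∀ X u, P X u → u ∉ X) {u₀ : V} (h₀ : P ∅ u₀)
    (hstep : ∀ X u, P X u → ∃ w, G.Adj u w ∧ P (insert u X) w) :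
    ∃ r : ℕ → V, Function.Injective r ∧ ∀ n, G.Adj (r n) (r (n + 1)) := by
  choose! next hnext using hstep
  let s : ℕ → Finset V × V := fun n =>
    Nat.rec (∅, u₀) (fun _ p => (insert p.2 p.1, next p.1 p.2)) n
  have hs : ∀ n, P (s n).1 (s n).2 := fun n => Nat.rec h₀ (fun _ ih => (hnext _ _ ih).2) n
  have hmem : ∀ m n, m < n → (s m).2 ∈ (s n).1 := by
    intro m n hmn
    induction hmn with
    | refl => exact Finset.mem_insert_self _ _
    | step _ ih => exact Finset.mem_insert_of_mem ih
  refine ⟨fun n => (s n).2, Function.Injective.of_lt_imp_ne fun m n hmn heq => ?_,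
    fun n => (hnext _ _ (hs n)).1⟩
  exact hP _ _ (hs n) (heq ▸ hmem m n hmn)

end

/-- If the inverse limit of the component system (a direction of `G`)
is nonempty, then `G` contains a ray. Equivalently, rayless graphs have no end. -/
theorem stmt6 (G : SimpleGraph V)
    (h : ∃ f : ∀ X : Finset V, Comps G (X : Set V),
      ∀ (X X' : Finset V) (hXX' : (X : Set V) ⊆ (X' : Set V)),
        compMap G hXX' (f X') = f X) :
    ∃ r : ℕ → V, Function.Injective r ∧ ∀ n, G.Adj (r n) (r (n + 1)) := by
  classical
  obtain ⟨f, hf⟩ := h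
  obtain ⟨u₀, hu₀⟩ := (f ∅).exists_rep
  refine exists_ray_of_forall_exists_adj (fun X u => u ∈ suppV G X (f X)) ?_ (u₀ := u₀.1)
    ⟨u₀, hu₀, rfl⟩ fun _ _ => exists_adj_mem_suppV_insert f hf
  rintro X u ⟨u', -, rfl⟩
  exact u'.2
end

section
/- If a graph G is tough (deleting any finite vertex set leaves finitely many components) but has no ray, then G is finite. Equivalently: every infinite tough graph contains a ray. -/
/-!
Grow a path greedily, keeping the invariant that its last vertex `v` lies in an infinite
component `C` of `G - K`, where `K` is the set of earlier vertices. Since `G - (K ∪ {v})` has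
only finitely many components, one of them, `D`, meets `C \ {v}` infinitely often; `D` lies
inside `C`, and since `C` is connected, `D` contains a neighbour of `v`. Extending the path by
that neighbour restores the invariant, and the path never revisits a vertex.
-/

open SimpleGraph Set

variable {V : Type*}

namespace SimpleGraph

variable {G : SimpleGraph V}

theorem ComponentCompl.exists_infinite_inter {K S : Set V} [Finite (G.ComponentCompl K)]
    (hS : S.Infinite) (hSK : ∀ x ∈ S, x ∉ K) :
    ∃ C : G.ComponentCompl K, (S ∩ C).Infinite := by
  by_contra! hfin
  refine hS ((Set.finite_iUnion hfin).subset fun x hx => ?_)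
  exact Set.mem_iUnion.mpr ⟨G.componentComplMk (hSK x hx), hx, G.componentComplMk_mem _⟩

theorem ComponentCompl.exists_adj_of_mem_insert {K : Set V} {u v : V}
    {C : G.ComponentCompl K} (huC : u ∈ C) (hvC : v ∈ C)
    {D : G.ComponentCompl (insert v K)} (huD : u ∈ D) :
    ∃ w ∈ D, G.Adj v w := by
  obtain ⟨huK, rfl⟩ := huC
  obtain ⟨hvK, hv⟩ := hvC
  obtain ⟨p⟩ := ConnectedComponent.exact hv.symm
  have hvD : v ∉ D := fun h => notMem_of_mem h (Set.mem_insert v K)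
  -- A walk from `u` to `v` in `G - K` has to leave `D`, and it can only do so into `v`.
  obtain ⟨d, -, hfst, hsnd⟩ := p.exists_boundary_dart {x | x.1 ∈ D} huD hvD
  have hsnd_eq : d.snd.1 = v := by
    by_contra hne
    have hsnd_notMem : d.snd.1 ∉ insert v K := by
      simp only [Set.mem_insert_iff, not_or]
      exact ⟨hne, d.snd.2⟩
    exact hsnd (mem_of_adj _ _ hfst hsnd_notMem d.adj)
  exact ⟨d.fst.1, hfst, hsnd_eq ▸ d.adj.symm⟩

theorem ComponentCompl.exists_adj_infinite_insert {K : Set V} {v : V}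
    [Finite (G.ComponentCompl (insert v K))] {C : G.ComponentCompl K} (hvC : v ∈ C)
    (hC : (C : Set V).Infinite) :
    ∃ D : G.ComponentCompl (insert v K), (D : Set V).Infinite ∧ ∃ w ∈ D, G.Adj v w := by
  have hSK : ∀ x ∈ (C : Set V) \ {v}, x ∉ insert v K := fun x ⟨hxC, hxv⟩ hx =>
    (Set.mem_insert_iff.mp hx).elim hxv (notMem_of_mem hxC)
  obtain ⟨D, hD⟩ := exists_infinite_inter (G := G) (hC.sdiff (Set.finite_singleton v)) hSK
  obtain ⟨u, ⟨huC, -⟩, huD⟩ := hD.nonempty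
  exact ⟨D, hD.mono Set.inter_subset_right, exists_adj_of_mem_insert huC hvC huD⟩

structure RayFront (G : SimpleGraph V) where
  head : V
  visited : Set V
  comp : G.ComponentCompl visited
  finite_visited : visited.Finite
  head_mem : head ∈ comp
  infinite_comp : (comp : Set V).Infinite

theorem RayFront.head_notMem (s : RayFront G) : s.head ∉ s.visited :=
  ComponentCompl.notMem_of_mem s.head_mem

theorem RayFront.exists_extend (htough : ∀ X : Set V, X.Finite → Finite (G.ComponentCompl X))
    (s : RayFront G) :
    ∃ t : RayFront G, t.visited = insert s.head s.visited ∧ G.Adj s.head t.head := by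
  have hfin := s.finite_visited.insert s.head
  have := htough _ hfin
  obtain ⟨D, hD, w, hwD, hadj⟩ :=
    ComponentCompl.exists_adj_infinite_insert s.head_mem s.infinite_comp
  exact ⟨⟨w, _, D, hfin, hwD, hD⟩, rfl, hadj⟩

theorem RayFront.nonempty [Infinite V] [Finite (G.ComponentCompl ∅)] :
    Nonempty (RayFront G) := by
  obtain ⟨C, hC⟩ := ComponentCompl.exists_infinite_inter (G := G) Set.infinite_univ
    (fun x _ => Set.notMem_empty x)
  obtain ⟨v, -, hv⟩ := hC.nonempty
  exact ⟨⟨v, ∅, C, Set.finite_empty, hv, hC.mono Set.inter_subset_right⟩⟩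

end SimpleGraph

theorem Function.injective_of_notMem_of_insert {α : Type*} {f : ℕ → α} {K : ℕ → Set α}
    (hK : ∀ n, K (n + 1) = insert (f n) (K n)) (hf : ∀ n, f n ∉ K n) : Injective f := by
  have hmono : Monotone K := monotone_nat_of_le_succ fun n => hK n ▸ Set.subset_insert _ _
  refine .of_lt_imp_ne fun m n hmn heq => hf n ?_
  exact heq ▸ hmono (Nat.succ_le_of_lt hmn) (hK m ▸ Set.mem_insert _ _)

/-- Every infinite tough graph contains a ray. -/
theorem stmt7 (G : SimpleGraph V) [Infinite V]
    (htough : ∀ X : Set V, X.Finite → Finite (Comps G X)) :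
    ∃ r : ℕ → V, Function.Injective r ∧ ∀ n, G.Adj (r n) (r (n + 1)) := by
  have := htough ∅ Set.finite_empty
  obtain ⟨start⟩ := RayFront.nonempty (G := G)
  choose next hnext_visited hnext_adj using RayFront.exists_extend htough
  have hstep : ∀ n, next^[n + 1] start = next (next^[n] start) := fun n =>
    Function.iterate_succ_apply' next n start
  refine ⟨fun n => (next^[n] start).head, ?_, fun n => by simpa only [hstep] using hnext_adj _⟩
  exact Function.injective_of_notMem_of_insert (K := fun n => (next^[n] start).visited)
    (fun n => by simpa only [hstep] using hnext_visited _) (fun n => RayFront.head_notMem _)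
end

section
/- Let G be a graph. A vertex v of G has infinite degree if and only if v dominates some end of G or v lies in some critical vertex set of G. -/
open SimpleGraph Set

variable {V : Type*}

/-!
If `v` has infinitely many neighbours, either some finite `X ∋ v` leaves infinitely many
components of `G - X` adjacent to `v`, or none does. In the first case, by pigeonhole infinitely
many of these components share a neighbourhood `Y ∋ v`; being closed under adjacency outside
`Y`, they are components of `G - Y` too, so `Y` is critical. In the second case a free
ultrafilter on the neighbours of `v` picks, for each finite `X`, the unique component of `G - X`
containing an ultrafilter-large set of them; these choices are compatible and dominated by `v`.
Conversely, a dominated direction or a critical set containing `v` provides neighbours of `v`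
outside every finite set, respectively in infinitely many disjoint components.
-/

namespace Comps

variable {G : SimpleGraph V} {X X' Y : Set V}

lemma mem_suppV {C : Comps G X} {w : V} :
    w ∈ suppV G X C ↔ ∃ h : w ∉ X, (G.induce Xᶜ).connectedComponentMk ⟨w, h⟩ = C :=
  ⟨fun ⟨u, hu, hw⟩ => hw ▸ ⟨u.2, hu⟩, fun ⟨h, hC⟩ => ⟨⟨w, h⟩, hC, rfl⟩⟩

lemma notMem_of_mem_suppV {C : Comps G X} {w : V} (hw : w ∈ suppV G X C) : w ∉ X :=
  (mem_suppV.mp hw).1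

lemma suppV_nonempty (C : Comps G X) : (suppV G X C).Nonempty :=
  let ⟨u, hu⟩ := C.exists_rep
  ⟨u.1, u, hu, rfl⟩

lemma eq_of_mem_suppV {C₁ C₂ : Comps G X} {w : V}
    (h₁ : w ∈ suppV G X C₁) (h₂ : w ∈ suppV G X C₂) : C₁ = C₂ := by
  obtain ⟨_, rfl⟩ := mem_suppV.mp h₁
  obtain ⟨_, rfl⟩ := mem_suppV.mp h₂
  rfl

lemma suppV_subset_suppV_compMap (h : X ⊆ X') (C : Comps G X') :
    suppV G X' C ⊆ suppV G X (compMap G h C) := by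
  rintro _ ⟨u, rfl, rfl⟩
  exact ⟨inclHom G h u, rfl, rfl⟩

lemma mem_suppV_of_adj {C : Comps G X} {a b : V} (ha : a ∈ suppV G X C) (hb : b ∉ X)
    (hab : G.Adj a b) : b ∈ suppV G X C := by
  obtain ⟨haX, rfl⟩ := mem_suppV.mp ha
  exact mem_suppV.mpr ⟨hb, ConnectedComponent.connectedComponentMk_eq_of_adj
    (show (G.induce Xᶜ).Adj ⟨b, hb⟩ ⟨a, haX⟩ from hab.symm)⟩

lemma suppV_compMap_of_nbhd_eq (hYX : Y ⊆ X) {C : Comps G X} (hC : nbhd G X C = Y) :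
    suppV G Y (compMap G hYX C) = suppV G X C := by
  refine Subset.antisymm ?_ (suppV_subset_suppV_compMap hYX C)
  have closed : ∀ a b : ↥Yᶜ, (G.induce Yᶜ).Adj a b → a.1 ∈ suppV G X C → b.1 ∈ suppV G X C := by
    intro a b hab ha
    refine mem_suppV_of_adj ha (fun hbX => b.2 ?_) hab
    have hb : b.1 ∈ nbhd G X C := ⟨hbX, a.1, ha, hab.symm⟩
    rwa [hC] at hb
  obtain ⟨u, rfl⟩ := C.exists_rep
  suffices h : ∀ b, (G.induce Yᶜ).Reachable (inclHom G hYX u) b → b.1 ∈ suppV G X _ by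
    intro w hw
    obtain ⟨hwY, hw⟩ := mem_suppV.mp hw
    exact h ⟨w, hwY⟩ (ConnectedComponent.eq.mp hw).symm
  intro b hb
  rw [reachable_iff_reflTransGen] at hb
  induction hb with
  | refl => exact ⟨u, rfl, rfl⟩
  | tail _ hab ih => exact closed _ _ hab ih

lemma nbhd_compMap_of_nbhd_eq (hYX : Y ⊆ X) {C : Comps G X} (hC : nbhd G X C = Y) :
    nbhd G Y (compMap G hYX C) = Y := by
  refine Subset.antisymm (fun _ hx => hx.1) (fun x hx => ⟨hx, ?_⟩)
  rw [suppV_compMap_of_nbhd_eq hYX hC]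
  exact (hC ▸ hx : x ∈ nbhd G X C).2

lemma compMap_injOn_compsWithNbhd (hYX : Y ⊆ X) :
    InjOn (compMap G hYX) (compsWithNbhd G X Y) := by
  intro C₁ hC₁ C₂ hC₂ heq
  obtain ⟨w, hw⟩ := suppV_nonempty C₁
  refine eq_of_mem_suppV hw ?_
  rw [← suppV_compMap_of_nbhd_eq hYX hC₂, ← heq, suppV_compMap_of_nbhd_eq hYX hC₁]
  exact hw

lemma critical_of_infinite_compsWithNbhd (hX : X.Finite) (hYX : Y ⊆ X)
    (hinf : (compsWithNbhd G X Y).Infinite) : Critical G Y :=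
  ⟨hX.subset hYX, infinite_of_injOn_mapsTo (compMap_injOn_compsWithNbhd hYX)
    (fun _ hC => nbhd_compMap_of_nbhd_eq hYX hC) hinf⟩

end Comps

def compsAdjTo (G : SimpleGraph V) (X : Set V) (v : V) : Set (Comps G X) :=
  {C | ∃ w ∈ suppV G X C, G.Adj v w}

section Degree

variable {G : SimpleGraph V} {X Y : Set V} {v : V}

lemma infinite_neighborSet_of_infinite_compsAdjTo (h : (compsAdjTo G X v).Infinite) :
    (G.neighborSet v).Infinite := by
  have hsub : compsAdjTo G X v ⊆
      (G.induce Xᶜ).connectedComponentMk '' (Subtype.val ⁻¹' G.neighborSet v) := by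
    rintro _ ⟨_, ⟨u, rfl, rfl⟩, hadj⟩
    exact ⟨u, hadj, rfl⟩
  exact ((h.mono hsub).of_image _ |>.image Subtype.val_injective.injOn).mono
    (image_preimage_subset _ _)

lemma Critical.infinite_neighborSet (hY : Critical G Y) (hv : v ∈ Y) :
    (G.neighborSet v).Infinite := by
  refine infinite_neighborSet_of_infinite_compsAdjTo (hY.2.mono fun C hC => ?_)
  obtain ⟨-, hadj⟩ : v ∈ nbhd G Y C := by rwa [show nbhd G Y C = Y from hC]
  exact hadj

lemma exists_critical_of_infinite_compsAdjTo (hX : X.Finite) (hv : v ∈ X)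
    (h : (compsAdjTo G X v).Infinite) : ∃ Y, Critical G Y ∧ v ∈ Y := by
  by_contra! hcrit
  have hsub : compsAdjTo G X v ⊆ ⋃ Y ∈ {Y | Y ⊆ X ∧ v ∈ Y}, compsWithNbhd G X Y := by
    rintro C ⟨w, hw, hadj⟩
    exact mem_biUnion (x := nbhd G X C) ⟨fun _ hx => hx.1, hv, w, hw, hadj⟩ rfl
  refine h ((Finite.biUnion (hX.finite_subsets.subset fun _ hY => hY.1) ?_).subset hsub)
  rintro Y ⟨hYX, hvY⟩
  by_contra hinf
  exact hcrit Y (Comps.critical_of_infinite_compsWithNbhd hX hYX hinf) hvY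

end Degree

def IsDirection (G : SimpleGraph V) (f : ∀ X : Finset V, Comps G (X : Set V)) : Prop :=
  ∀ (X X' : Finset V) (hXX' : (X : Set V) ⊆ (X' : Set V)), compMap G hXX' (f X') = f X

def Dominates (G : SimpleGraph V) (v : V) (f : ∀ X : Finset V, Comps G (X : Set V)) : Prop :=
  ∀ X : Finset V, v ∉ X → ∃ w ∈ suppV G (X : Set V) (f X), G.Adj v w

section Direction

variable {G : SimpleGraph V} {v : V} {U : Ultrafilter V}

lemma Dominates.infinite_neighborSet {f : ∀ X : Finset V, Comps G (X : Set V)}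
    (hf : Dominates G v f) : (G.neighborSet v).Infinite := by
  intro hfin
  obtain ⟨w, hw, hadj⟩ := hf hfin.toFinset (by simp)
  exact Comps.notMem_of_mem_suppV hw (by simpa using hadj)

lemma Comps.eq_of_suppV_mem_ultrafilter {X : Set V} {C₁ C₂ : Comps G X}
    (h₁ : suppV G X C₁ ∈ U) (h₂ : suppV G X C₂ ∈ U) : C₁ = C₂ :=
  let ⟨_, hw₁, hw₂⟩ := U.nonempty_of_mem (Filter.inter_mem h₁ h₂)
  Comps.eq_of_mem_suppV hw₁ hw₂

lemma Comps.exists_suppV_mem_ultrafilter {X A : Set V} (hX : Xᶜ ∈ U) (hA : A ∈ U)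
    (hfin : {C : Comps G X | ∃ w ∈ suppV G X C, w ∈ A}.Finite) :
    ∃ C : Comps G X, suppV G X C ∈ U := by
  have hcover : Xᶜ ∩ A ⊆ ⋃ C ∈ {C : Comps G X | ∃ w ∈ suppV G X C, w ∈ A}, suppV G X C := by
    rintro w ⟨hwX, hwA⟩
    have hw : w ∈ suppV G X ((G.induce Xᶜ).connectedComponentMk ⟨w, hwX⟩) := ⟨_, rfl, rfl⟩
    exact mem_biUnion ⟨w, hw, hwA⟩ hw
  obtain ⟨C, -, hC⟩ := (Ultrafilter.finite_biUnion_mem_iff hfin).mp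
    (Filter.mem_of_superset (Filter.inter_mem hX hA) hcover)
  exact ⟨C, hC⟩

lemma exists_isDirection_of_ultrafilter
    (h : ∀ X : Finset V, ∃ C : Comps G (X : Set V), suppV G X C ∈ U) :
    ∃ f, IsDirection G f ∧ ∀ X : Finset V, suppV G X (f X) ∈ U := by
  choose f hf using h
  refine ⟨f, fun X X' hXX' => Comps.eq_of_suppV_mem_ultrafilter ?_ (hf X), hf⟩
  exact Filter.mem_of_superset (hf X') (Comps.suppV_subset_suppV_compMap hXX' _)

lemma exists_dominated_direction (hinf : (G.neighborSet v).Infinite)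
    (hfin : ∀ X : Finset V, v ∈ X → (compsAdjTo G X v).Finite) :
    ∃ f, IsDirection G f ∧ Dominates G v f := by
  classical
  have := hinf.cofinite_inf_principal_neBot
  obtain ⟨U, hU⟩ := Ultrafilter.exists_le (Filter.cofinite ⊓ Filter.principal (G.neighborSet v))
  have hN : G.neighborSet v ∈ U := hU (Filter.mem_inf_of_right (Filter.mem_principal_self _))
  have hlives : ∀ X : Finset V, ∃ C : Comps G (X : Set V), suppV G X C ∈ U := by
    intro X
    have hX : ((insert v X : Finset V) : Set V)ᶜ ∈ U :=
      hU (Filter.mem_inf_of_left (insert v X).finite_toSet.compl_mem_cofinite)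
    obtain ⟨C, hC⟩ := Comps.exists_suppV_mem_ultrafilter hX hN (hfin _ (X.mem_insert_self v))
    have hsub : (X : Set V) ⊆ (insert v X : Finset V) := Finset.coe_subset.mpr (X.subset_insert v)
    exact ⟨compMap G hsub C, Filter.mem_of_superset hC (Comps.suppV_subset_suppV_compMap hsub C)⟩
  obtain ⟨f, hdir, hfU⟩ := exists_isDirection_of_ultrafilter hlives
  refine ⟨f, hdir, fun X _ => ?_⟩
  obtain ⟨w, hw, hadj⟩ := U.nonempty_of_mem (Filter.inter_mem (hfU X) hN)
  exact ⟨w, hw, hadj⟩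

end Direction

/-- A vertex `v` has infinite degree iff `v` dominates some end
(a direction, i.e. a compatible choice of components) of `G` or `v` lies in some
critical vertex set. -/
theorem stmt8 (G : SimpleGraph V) (v : V) :
    (G.neighborSet v).Infinite ↔
      ((∃ f : ∀ X : Finset V, Comps G (X : Set V),
          (∀ (X X' : Finset V) (hXX' : (X : Set V) ⊆ (X' : Set V)),
            compMap G hXX' (f X') = f X) ∧
          (∀ X : Finset V, v ∉ X → ∃ w ∈ suppV G (X : Set V) (f X), G.Adj v w))
        ∨ ∃ Y : Set V, Critical G Y ∧ v ∈ Y) := by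
  refine ⟨fun hinf => ?_, ?_⟩
  · by_cases h : ∃ X : Finset V, v ∈ X ∧ (compsAdjTo G X v).Infinite
    · obtain ⟨X, hvX, hX⟩ := h
      exact Or.inr (exists_critical_of_infinite_compsAdjTo X.finite_toSet hvX hX)
    · push Not at h
      exact Or.inl (exists_dominated_direction hinf h)
  · rintro (⟨f, -, hdom⟩ | ⟨Y, hY, hvY⟩)
    · exact Dominates.infinite_neighborSet hdom
    · exact hY.infinite_neighborSet hvY
end

section
/- With Γ_X as above, for finite vertex sets X ⊆ X' the map f_{X',X}: Γ_{X'} → Γ_X that restricts to c_{X',X} on C_{X'}, is the identity on crit(X') ∩ crit(X), and sends each Y ∈ crit(X') ∖ crit(X) to the unique component of G − X meeting Y, is continuous. -/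
open SimpleGraph Set

variable {V : Type*}

/-- `crit(X)`: the critical subsets of `X`. -/
def CritIn (G : SimpleGraph V) (X : Set V) : Set (Set V) :=
  {Y | Y ⊆ X ∧ Critical G Y}

/-- `Γ_X = C_X ⊔ crit(X)`. -/
def Gamma (G : SimpleGraph V) (X : Set V) := Comps G X ⊕ CritIn G X

/-- The basic open sets of `Γ_X`: singletons of components, and, for each critical
`Y ⊆ X` and cofinite `𝒞 ⊆ C_X(Y)`, the set `𝒞 ∪ {Y}`. -/
def gammaBasic (G : SimpleGraph V) (X : Set V) : Set (Set (Gamma G X)) :=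
  {s | ∃ C : Comps G X, s = {Sum.inl C}} ∪
  {s | ∃ (Y : CritIn G X) (𝒞 : Set (Comps G X)),
      𝒞 ⊆ compsWithNbhd G X Y.1 ∧ (compsWithNbhd G X Y.1 \ 𝒞).Finite ∧
      s = Sum.inl '' 𝒞 ∪ {Sum.inr Y}}

/-- The topology of `Γ_X`. -/
def gammaTop (G : SimpleGraph V) (X : Set V) : TopologicalSpace (Gamma G X) :=
  .generateFrom (gammaBasic G X)

/-! Continuity only has to be checked at the critical points `Z ∈ crit(X')`. If `Z ⊄ X`,
pick `y ∈ Z \ X` in the component `C = f Z`; every component of `G - X'` with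
neighbourhood `Z` is adjacent to `y`, so it lies in `C` and `f` is constant on the whole
basic neighbourhood of `Z`. If `Z ⊆ X`, a component of `G - X'` with neighbourhood `Z` has
no edge into `X' \ X`, so it is already a component of `G - X`, with the same neighbourhood.
Hence `c_{X',X}` maps `C_{X'}(Z)` injectively into `C_X(Z)`, and pulls cofinite subsets
back to cofinite subsets. -/

attribute [local instance] gammaTop

namespace Gamma

variable {G : SimpleGraph V} {X X' : Set V}

lemma mem_suppV_iff {C : Comps G X} {v : V} :
    v ∈ suppV G X C ↔ ∃ hv : v ∉ X, (G.induce Xᶜ).connectedComponentMk ⟨v, hv⟩ = C := by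
  constructor
  · rintro ⟨⟨w, hw⟩, hmk, rfl⟩
    exact ⟨hw, hmk⟩
  · rintro ⟨hv, hmk⟩
    exact ⟨⟨v, hv⟩, hmk, rfl⟩

lemma suppV_nonempty (C : Comps G X) : (suppV G X C).Nonempty := by
  obtain ⟨v, rfl⟩ := C.exists_rep
  exact ⟨v.1, v, rfl, rfl⟩

lemma eq_of_mem_suppV {C D : Comps G X} {v : V} (hC : v ∈ suppV G X C)
    (hD : v ∈ suppV G X D) : C = D := by
  obtain ⟨hv, rfl⟩ := mem_suppV_iff.1 hC
  obtain ⟨-, rfl⟩ := mem_suppV_iff.1 hD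
  rfl

lemma suppV_subset_suppV_compMap (h : X ⊆ X') (C' : Comps G X') :
    suppV G X' C' ⊆ suppV G X (compMap G h C') := by
  rintro _ ⟨v, rfl, rfl⟩
  exact ⟨inclHom G h v, (ConnectedComponent.map_mk _ _).symm, rfl⟩

lemma mem_suppV_of_adj {C : Comps G X} {v w : V} (hv : v ∈ suppV G X C) (hw : w ∉ X)
    (hadj : G.Adj v w) : w ∈ suppV G X C := by
  obtain ⟨hv', rfl⟩ := mem_suppV_iff.1 hv
  exact mem_suppV_iff.2 ⟨hw, (ConnectedComponent.sound
    (Adj.reachable (show (G.induce Xᶜ).Adj ⟨v, hv'⟩ ⟨w, hw⟩ from hadj))).symm⟩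

lemma suppV_compMap_of_nbhd_subset (h : X ⊆ X') {C' : Comps G X'}
    (hC' : nbhd G X' C' ⊆ X) : suppV G X (compMap G h C') = suppV G X' C' := by
  have closed : ∀ {a b : ↥Xᶜ}, (G.induce Xᶜ).Walk a b → a.1 ∈ suppV G X' C' →
      b.1 ∈ suppV G X' C' := by
    intro a b p
    induction p with
    | nil => exact id
    | @cons a b _ hab _ ih =>
      refine fun ha => ih ?_
      by_cases hb : b.1 ∈ X'
      · exact absurd (hC' ⟨hb, a.1, ha, hab.symm⟩) b.2
      · exact mem_suppV_of_adj ha hb hab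
  refine (suppV_subset_suppV_compMap h C').antisymm' fun v hv => ?_
  obtain ⟨u, hu⟩ := suppV_nonempty C'
  obtain ⟨hu', hmku⟩ := mem_suppV_iff.1 (suppV_subset_suppV_compMap h C' hu)
  obtain ⟨hv', hmkv⟩ := mem_suppV_iff.1 hv
  obtain ⟨p⟩ := ConnectedComponent.exact (hmku.trans hmkv.symm)
  exact closed p hu

lemma nbhd_compMap_of_nbhd_subset (h : X ⊆ X') {C' : Comps G X'}
    (hC' : nbhd G X' C' ⊆ X) : nbhd G X (compMap G h C') = nbhd G X' C' := by
  ext x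
  rw [nbhd, nbhd, suppV_compMap_of_nbhd_subset h hC']
  exact ⟨fun ⟨hx, hadj⟩ => ⟨h hx, hadj⟩, fun hx => ⟨hC' hx, hx.2⟩⟩

lemma mapsTo_compMap_compsWithNbhd (h : X ⊆ X') {Y : Set V} (hY : Y ⊆ X) :
    MapsTo (compMap G h) (compsWithNbhd G X' Y) (compsWithNbhd G X Y) := fun _ hC' =>
  (nbhd_compMap_of_nbhd_subset h (hC'.trans_subset hY)).trans hC'

lemma injOn_compMap (h : X ⊆ X') :
    InjOn (compMap G h) {C' | nbhd G X' C' ⊆ X} := fun C₁ h₁ C₂ h₂ heq => by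
  obtain ⟨v, hv⟩ := suppV_nonempty C₁
  refine eq_of_mem_suppV hv ?_
  rw [← suppV_compMap_of_nbhd_subset h h₂, ← heq, suppV_compMap_of_nbhd_subset h h₁]
  exact hv

lemma finite_compsWithNbhd_diff_preimage (h : X ⊆ X') {Y : Set V} (hY : Y ⊆ X)
    {𝒞 : Set (Comps G X)} (h𝒞 : (compsWithNbhd G X Y \ 𝒞).Finite) :
    (compsWithNbhd G X' Y \ compMap G h ⁻¹' 𝒞).Finite := by
  refine Finite.of_finite_image (h𝒞.subset ?_) ((injOn_compMap h).mono ?_)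
  · rintro _ ⟨C', ⟨hC'Y, hC'𝒞⟩, rfl⟩
    exact ⟨mapsTo_compMap_compsWithNbhd h hY hC'Y, hC'𝒞⟩
  · rintro C' ⟨hC'Y, -⟩
    exact (hC'Y : nbhd G X' C' = Y).trans_subset hY

lemma compMap_eq_of_mem_nbhd (h : X ⊆ X') {C' : Comps G X'} {C : Comps G X} {y : V}
    (hyC' : y ∈ nbhd G X' C') (hyC : y ∈ suppV G X C) : compMap G h C' = C := by
  obtain ⟨-, v, hv, hadj⟩ := hyC'
  exact eq_of_mem_suppV (mem_suppV_of_adj (suppV_subset_suppV_compMap h C' hv)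
    (mem_suppV_iff.1 hyC).1 hadj.symm) hyC

lemma isOpen_singleton_inl (C : Comps G X) : IsOpen ({Sum.inl C} : Set (Gamma G X)) :=
  TopologicalSpace.isOpen_generateFrom_of_mem (Or.inl ⟨C, rfl⟩)

lemma isOpen_inl_image_union_singleton_inr (Y : CritIn G X) {𝒞 : Set (Comps G X)}
    (h𝒞 : 𝒞 ⊆ compsWithNbhd G X Y.1) (hfin : (compsWithNbhd G X Y.1 \ 𝒞).Finite) :
    IsOpen (Sum.inl '' 𝒞 ∪ {Sum.inr Y} : Set (Gamma G X)) :=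
  TopologicalSpace.isOpen_generateFrom_of_mem (Or.inr ⟨Y, 𝒞, h𝒞, hfin, rfl⟩)

lemma exists_eq_inl_image_union_of_inr_mem {s : Set (Gamma G X)} (hs : s ∈ gammaBasic G X)
    {Y : CritIn G X} (hY : (Sum.inr Y : Gamma G X) ∈ s) :
    ∃ 𝒞, (compsWithNbhd G X Y.1 \ 𝒞).Finite ∧ s = Sum.inl '' 𝒞 ∪ {Sum.inr Y} := by
  rcases hs with ⟨C, rfl⟩ | ⟨Y', 𝒞, -, h𝒞, rfl⟩
  · cases hY
  · rcases hY with ⟨_, _, h⟩ | h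
    · cases h
    · cases h
      exact ⟨𝒞, h𝒞, rfl⟩

end Gamma

open Gamma in
theorem stmt14_general (G : SimpleGraph V) (X X' : Set V)
    (hXX' : X ⊆ X') (f : Gamma G X' → Gamma G X)
    (h1 : ∀ C' : Comps G X', f (Sum.inl C') = Sum.inl (compMap G hXX' C'))
    (h2 : ∀ Y : CritIn G X', ∀ hY : Y.1 ⊆ X,
      f (Sum.inr Y) = Sum.inr ⟨Y.1, hY, Y.2.2⟩)
    (h3 : ∀ Y : CritIn G X', ¬ Y.1 ⊆ X →
      ∃ C : Comps G X, f (Sum.inr Y) = Sum.inl C ∧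
        (suppV G X C ∩ Y.1).Nonempty) :
    @Continuous (Gamma G X') (Gamma G X) (gammaTop G X') (gammaTop G X) f := by
  refine continuous_generateFrom_iff.2 fun s hs => isOpen_iff_forall_mem_open.2 ?_
  rintro (C' | Z) hx
  · exact ⟨{Sum.inl C'}, singleton_subset_iff.2 hx, isOpen_singleton_inl C', rfl⟩
  by_cases hZ : Z.1 ⊆ X
  · change f (Sum.inr Z) ∈ s at hx
    rw [h2 Z hZ] at hx
    obtain ⟨𝒞, h𝒞, rfl⟩ := exists_eq_inl_image_union_of_inr_mem hs hx
    refine ⟨Sum.inl '' (compsWithNbhd G X' Z.1 ∩ compMap G hXX' ⁻¹' 𝒞) ∪ {Sum.inr Z}, ?_,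
      isOpen_inl_image_union_singleton_inr Z inter_subset_left ?_, Or.inr rfl⟩
    · rintro _ (⟨C', ⟨-, hC'𝒞⟩, rfl⟩ | rfl)
      · exact Or.inl ⟨_, hC'𝒞, (h1 C').symm⟩
      · show f (Sum.inr Z) ∈ Sum.inl '' 𝒞 ∪ {Sum.inr _}
        rwa [h2 Z hZ]
    · rw [sdiff_self_inter]
      exact finite_compsWithNbhd_diff_preimage hXX' hZ h𝒞
  · obtain ⟨C, hfZ, y, hyC, hyZ⟩ := h3 Z hZ
    refine ⟨Sum.inl '' compsWithNbhd G X' Z.1 ∪ {Sum.inr Z}, ?_,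
      isOpen_inl_image_union_singleton_inr Z Subset.rfl (by simp), Or.inr rfl⟩
    rintro _ (⟨C', hC'Z, rfl⟩ | rfl)
    · change f (Sum.inl C') ∈ s
      rwa [h1, compMap_eq_of_mem_nbhd hXX' (hC'Z ▸ hyZ : y ∈ _) hyC, ← hfZ]
    · exact hx

/-- For `X ⊆ X'`, the map `f_{X',X} : Γ_{X'} → Γ_X` that restricts to
`c_{X',X}` on `C_{X'}`, is the identity on `crit(X') ∩ crit(X)`, and sends each
`Y ∈ crit(X') ∖ crit(X)` to the (unique) component of `G - X` meeting `Y`, is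
continuous. -/
theorem stmt14 (G : SimpleGraph V) (X X' : Set V) (hX' : X'.Finite)
    (hXX' : X ⊆ X') (f : Gamma G X' → Gamma G X)
    (h1 : ∀ C' : Comps G X', f (Sum.inl C') = Sum.inl (compMap G hXX' C'))
    (h2 : ∀ Y : CritIn G X', ∀ hY : Y.1 ⊆ X,
      f (Sum.inr Y) = Sum.inr ⟨Y.1, hY, Y.2.2⟩)
    (h3 : ∀ Y : CritIn G X', ¬ Y.1 ⊆ X →
      ∃ C : Comps G X, f (Sum.inr Y) = Sum.inl C ∧
        (suppV G X C ∩ Y.1).Nonempty) :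
    @Continuous (Gamma G X') (Gamma G X) (gammaTop G X') (gammaTop G X) f :=
  stmt14_general G X X' hXX' f h1 h2 h3
end

section
/- Let X be a finite vertex set of a graph G and let F be a filter on the poset of tame subsets of C_X (ordered by inclusion) such that F contains, for some critical Y ⊆ X, every cofinite subset of C_X(Y), and F is a filter (upward closed, closed under finite intersections, not containing ∅). If moreover every member 𝒞 of F is tame, then F cannot contain a set 𝒞 with C_X(Y) ∖ 𝒞 infinite; i.e. F is exactly the upward closure in the tame-subset poset of the cofinite filter on C_X(Y). -/
open SimpleGraph Set

variable {V : Type*}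

/-- A set `𝒞 ⊆ C_X` is tame if for no critical `Y ⊆ X` both `𝒞 ∩ C_X(Y)` and
`(C_X ∖ 𝒞) ∩ C_X(Y)` are infinite. -/
def Tame (G : SimpleGraph V) (X : Set V) (𝒞 : Set (Comps G X)) : Prop :=
  ∀ Y ⊆ X, Critical G Y →
    ¬((𝒞 ∩ compsWithNbhd G X Y).Infinite ∧
      ((compsWithNbhd G X Y) \ 𝒞).Infinite)

section CofiniteFilter

variable {α : Type*} {S : Set α} {F : Set (Set α)}

/-- Otherwise `S \ A` is cofinite in `S`, hence in `F`, and disjoint from `A`. -/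
theorem finite_diff_of_mem_of_cofinite_mem (hne : ∅ ∉ F)
    (hinter : ∀ A ∈ F, ∀ B ∈ F, A ∩ B ∈ F)
    (hcof : ∀ A ⊆ S, (S \ A).Finite → A ∈ F)
    (hsplit : ∀ A ∈ F, ¬((A ∩ S).Infinite ∧ (S \ A).Infinite)) {A : Set α} (hA : A ∈ F) :
    (S \ A).Finite := by
  by_contra hinf
  have hAS : (A ∩ S).Finite := by
    by_contra hAS
    exact hsplit A hA ⟨hAS, hinf⟩
  have hcompl : S \ A ∈ F := by
    refine hcof _ sdiff_subset ?_
    rw [sdiff_sdiff_right_self, inter_comm]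
    exact hAS
  have := hinter A hA _ hcompl
  rw [inter_sdiff_self] at this
  exact hne this

theorem eq_setOf_cofinite_subset_of_diff_finite {P : Set α → Prop}
    (hP : ∀ A ∈ F, P A)
    (hup : ∀ A ∈ F, ∀ B, P B → A ⊆ B → B ∈ F)
    (hcof : ∀ A ⊆ S, (S \ A).Finite → A ∈ F)
    (hfin : ∀ A ∈ F, (S \ A).Finite) :
    F = {A | P A ∧ ∃ D, D ⊆ S ∧ (S \ D).Finite ∧ D ⊆ A} := by
  refine Subset.antisymm (fun A hA => ?_) ?_
  · refine ⟨hP A hA, S ∩ A, inter_subset_left, ?_, inter_subset_right⟩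
    simpa only [sdiff_self_inter] using hfin A hA
  · rintro A ⟨hPA, D, hDS, hDfin, hDA⟩
    exact hup D (hcof D hDS hDfin) A hPA hDA

end CofiniteFilter

theorem stmt19_general (G : SimpleGraph V) (X Y : Set V) (hYX : Y ⊆ X)
    (hcrit : Critical G Y) (F : Set (Set (Comps G X)))
    (htame : ∀ A ∈ F, Tame G X A)
    (hne : ∅ ∉ F)
    (hup : ∀ A ∈ F, ∀ B, Tame G X B → A ⊆ B → B ∈ F)
    (hinter : ∀ A ∈ F, ∀ B ∈ F, A ∩ B ∈ F)
    (hcof : ∀ 𝒞 ⊆ compsWithNbhd G X Y,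
      (compsWithNbhd G X Y \ 𝒞).Finite → 𝒞 ∈ F) :
    (¬ ∃ 𝒞 ∈ F, (compsWithNbhd G X Y \ 𝒞).Infinite) ∧
    F = {𝒞 | Tame G X 𝒞 ∧ ∃ 𝒟, 𝒟 ⊆ compsWithNbhd G X Y ∧
          (compsWithNbhd G X Y \ 𝒟).Finite ∧ 𝒟 ⊆ 𝒞} := by
  have hfin : ∀ A ∈ F, (compsWithNbhd G X Y \ A).Finite := fun A hA =>
    finite_diff_of_mem_of_cofinite_mem hne hinter hcof
      (fun B hB => htame B hB Y hYX hcrit) hA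
  exact ⟨fun ⟨A, hA, hinf⟩ => hinf (hfin A hA),
    eq_setOf_cofinite_subset_of_diff_finite htame hup hcof hfin⟩

/-- A filter `F` on the poset of tame subsets of `C_X` containing all
cofinite subsets of `C_X(Y)` for some critical `Y ⊆ X` contains no set `𝒞` with
`C_X(Y) ∖ 𝒞` infinite; indeed `F` is exactly the upward closure (within tame sets)
of the cofinite filter on `C_X(Y)`. -/
theorem stmt19 (G : SimpleGraph V) (X Y : Set V) (hX : X.Finite) (hYX : Y ⊆ X)
    (hcrit : Critical G Y) (F : Set (Set (Comps G X)))
    (htame : ∀ A ∈ F, Tame G X A)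
    (hne : ∅ ∉ F)
    (hup : ∀ A ∈ F, ∀ B, Tame G X B → A ⊆ B → B ∈ F)
    (hinter : ∀ A ∈ F, ∀ B ∈ F, A ∩ B ∈ F)
    (hcof : ∀ 𝒞 ⊆ compsWithNbhd G X Y,
      (compsWithNbhd G X Y \ 𝒞).Finite → 𝒞 ∈ F) :
    (¬ ∃ 𝒞 ∈ F, (compsWithNbhd G X Y \ 𝒞).Infinite) ∧
    F = {𝒞 | Tame G X 𝒞 ∧ ∃ 𝒟, 𝒟 ⊆ compsWithNbhd G X Y ∧
          (compsWithNbhd G X Y \ 𝒟).Finite ∧ 𝒟 ⊆ 𝒞} :=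
  stmt19_general G X Y hYX hcrit F htame hne hup hinter hcof
end
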